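/- Let H be a Hopf *-algebra whose group-likes form an abelian group, with each group-like σ satisfying σ* = σ^{-1} as needed. The involution w_n(h^1⊗...⊗h^n) = σ S^{-1}((h^n)*)⊗...⊗σ S^{-1}((h^1)*) is anti-multiplicative with respect to the cup product: w_{p+q}(Ψ ⌣ Φ) = w_q(Φ) ⌣ w_p(Ψ) for Ψ ∈ H^⊗p (coefficient σ_1) and Φ ∈ H^⊗q (coefficient σ_2), where Ψ⌣Φ = Ψ⊗(σ_1▷Φ) has coefficient σ_1σ_2. -/

import Mathlib

/- STATEMENT 11: Let H be a Hopf *-algebra whose group-like elements form an abelian group,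
the relevant group-likes being self-adjoint.  The involution
w_n(h^1⊗...⊗h^n) = σS⁻¹((h^n)*) ⊗ ... ⊗ σS⁻¹((h^1)*) (on the component of coefficient σ)
is anti-multiplicative with respect to the cup product Ψ⌣Φ = Ψ⊗(σ_1▷Φ):
  w_{p+q}(Ψ ⌣ Φ) = w_q(Φ) ⌣ w_p(Ψ)
for Ψ ∈ H^⊗p (coefficient σ_1) and Φ ∈ H^⊗q (coefficient σ_2), where Ψ⌣Φ has coefficient
σ_1σ_2.  All operators send elementary tensors to elementary tensors, so the identity is
expressed on tuples. -/

variable {H : Type*}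

/-- The involution on the component of `H^⊗n` with coefficient (group-like) `σ`:
`w_n(h^1⊗...⊗h^n) = σS⁻¹((h^n)*) ⊗ ... ⊗ σS⁻¹((h^1)*)`. -/
noncomputable def hopfWtup [Ring H] [Star H] (Sinv : H → H) (σ : H) (n : ℕ)
    (h : Fin n → H) : Fin n → H :=
  fun j => σ * Sinv (star (h (Fin.rev j)))

/-- The cup product on elementary tensors: `(g ⌣ f) = g ⊗ (σ_1 ▷ f)`, `▷` being the
diagonal left multiplication action. -/
noncomputable def cupTup [Ring H] (σ₁ : H) {p q : ℕ}
    (g : Fin p → H) (f : Fin q → H) : Fin (p + q) → H :=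
  Fin.append g (fun j => σ₁ * f j)

section
variable [Ring H]

theorem hopfWtup_append [Star H] (Sinv : H → H) (σ : H) {m n : ℕ}
    (a : Fin m → H) (b : Fin n → H) :
    hopfWtup Sinv σ (m + n) (Fin.append a b) =
      fun j => Fin.append (hopfWtup Sinv σ n b) (hopfWtup Sinv σ m a)
        (Fin.cast (Nat.add_comm m n) j) := by
  funext j
  simp only [hopfWtup, Fin.append_rev]
  cases Fin.cast (Nat.add_comm m n) j using Fin.addCases <;>
    simp only [Fin.append_left, Fin.append_right, Function.comp_apply] <;> rfl

theorem hopfWtup_mul_coeff [Star H] (Sinv : H → H) (τ σ : H) (n : ℕ) (h : Fin n → H) :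
    hopfWtup Sinv (τ * σ) n h = fun j => τ * hopfWtup Sinv σ n h j :=
  funext fun _ => mul_assoc τ σ _

/-- `S⁻¹((σx)*) = σ⁻¹ S⁻¹(x*)`, and `σ⁻¹` commutes past `τ` to cancel `σ`. -/
theorem hopfWtup_mul_left_entries [StarRing H] {Sinv : H → H}
    (hSinvanti : ∀ a b : H, Sinv (a * b) = Sinv b * Sinv a) {σ σi τ : H}
    (hσ : σ * σi = 1) (hSinvσ : Sinv σ = σi) (hstarσ : star σ = σ)
    (hcomm : σi * τ = τ * σi) (n : ℕ) (h : Fin n → H) :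
    hopfWtup Sinv (σ * τ) n (fun j => σ * h j) = hopfWtup Sinv τ n h := by
  funext j
  simp only [hopfWtup]
  rw [star_mul, hstarσ, hSinvanti, hSinvσ, mul_assoc σ τ, ← mul_assoc τ, ← hcomm,
    mul_assoc σi, ← mul_assoc, hσ, one_mul]

end

theorem hopfWtup_antimult_cup_general
    [Ring H] [StarRing H] (Sinv : H → H) (σ₁ σ₁i σ₂ : H)
    -- `S⁻¹` is anti-multiplicative (H is a Hopf algebra with invertible antipode):
    (hSinvanti : ∀ a b : H, Sinv (a * b) = Sinv b * Sinv a)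
    -- σ₁, σ₂ are group-like, hence invertible with `S⁻¹(σ) = σ⁻¹`, and self-adjoint:
    (hσ₁ : σ₁ * σ₁i = 1)
    (hSinvσ₁ : Sinv σ₁ = σ₁i)
    (hstarσ₁ : star σ₁ = σ₁)
    -- the group-like elements commute (they form an abelian group):
    (hcomm : σ₁ * σ₂ = σ₂ * σ₁) (hcomm' : σ₁i * σ₂ = σ₂ * σ₁i)
    (p q : ℕ) (g : Fin p → H) (f : Fin q → H) :
    hopfWtup Sinv (σ₁ * σ₂) (p + q) (cupTup σ₁ g f) =
      fun j => cupTup σ₂ (hopfWtup Sinv σ₂ q f) (hopfWtup Sinv σ₁ p g)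
        (Fin.cast (Nat.add_comm p q) j) := by
  rw [cupTup, hopfWtup_append, hopfWtup_mul_left_entries hSinvanti hσ₁ hSinvσ₁ hstarσ₁ hcomm',
    hcomm, hopfWtup_mul_coeff]
  rfl

theorem hopfWtup_antimult_cup
    [Ring H] [StarRing H] (Sinv : H → H) (σ₁ σ₁i σ₂ σ₂i : H)
    -- `S⁻¹` is anti-multiplicative (H is a Hopf algebra with invertible antipode):
    (hSinvanti : ∀ a b : H, Sinv (a * b) = Sinv b * Sinv a)
    -- σ₁, σ₂ are group-like, hence invertible with `S⁻¹(σ) = σ⁻¹`, and self-adjoint: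
    (hσ₁ : σ₁ * σ₁i = 1) (hσ₁' : σ₁i * σ₁ = 1) (hσ₂ : σ₂ * σ₂i = 1) (hσ₂' : σ₂i * σ₂ = 1)
    (hSinvσ₁ : Sinv σ₁ = σ₁i) (hSinvσ₂ : Sinv σ₂ = σ₂i)
    (hstarσ₁ : star σ₁ = σ₁) (hstarσ₂ : star σ₂ = σ₂)
    -- the group-like elements commute (they form an abelian group):
    (hcomm : σ₁ * σ₂ = σ₂ * σ₁) (hcomm' : σ₁i * σ₂ = σ₂ * σ₁i)
    (p q : ℕ) (g : Fin p → H) (f : Fin q → H) :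
    hopfWtup Sinv (σ₁ * σ₂) (p + q) (cupTup σ₁ g f) =
      fun j => cupTup σ₂ (hopfWtup Sinv σ₂ q f) (hopfWtup Sinv σ₁ p g)
        (Fin.cast (Nat.add_comm p q) j) :=
  hopfWtup_antimult_cup_general Sinv σ₁ σ₁i σ₂ hSinvanti hσ₁ hSinvσ₁ hstarσ₁ hcomm hcomm' p q g f
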